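/- arXiv:q-alg/9702030 — 4 statements merged into one kernel-verified Lean document; each statement's English description precedes it below -/
import Mathlib

section
/- Under the same hypotheses, the center Z(A) of A is stable under the bracket {f,g} = i(c(f,g) − c(g,f)); that is, if f,g ∈ Z(A) then {f,g} ∈ Z(A). -/
/-- Under the same hypotheses as before (the first-order
deformation identity for the Hochschild 2-cocycle `c`), the center `Z(A)` of
`A` is stable under the bracket `{f,g} = i (c f g - c g f)`: if `f, g` are
central then so is `{f,g}`. -/
theorem center_stable_under_bracket
    {A : Type*} [Ring A] [Algebra ℂ A]
    (c : A →ₗ[ℂ] A →ₗ[ℂ] A)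
    (br : A → A → A)
    (hbr : ∀ f g, br f g = Complex.I • (c f g - c g f))
    (hfirst : ∀ f g h : A,
      Complex.I • ((h * c f g - c f g * h)
          - c (h * f - f * h) g - c f (h * g - g * h))
        = f * br h g - br h (f * g) + br h f * g) :
    ∀ f ∈ Set.center A, ∀ g ∈ Set.center A, br f g ∈ Set.center A := by
  intro f hf g hg
  rw [Semigroup.mem_center_iff] at hf hg ⊢
  intro h
  have e1 : Complex.I • (h * c f g - c f g * h)
      = f * br h g - br h (f * g) + br h f * g := by
    have H := hfirst f g h
    rw [hf h, hg h] at H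
    simpa using H
  have e2 : Complex.I • (h * c g f - c g f * h)
      = g * br h f - br h (g * f) + br h g * f := by
    have H := hfirst g f h
    rw [hf h, hg h] at H
    simpa using H
  have key : h * br f g - br f g * h = 0 := by
    have expand : h * br f g - br f g * h
        = Complex.I • (h * c f g - c f g * h)
          - Complex.I • (h * c g f - c g f * h) := by
      rw [hbr]
      simp only [smul_sub, mul_smul_comm, smul_mul_assoc, mul_sub, sub_mul]
      abel
    rw [expand, e1, e2, hf g, hf (br h g), hg (br h f)]
    abel
  exact (sub_eq_zero.mp key)
end

section
/- Let 𝔤_κ be the 14-dimensional real Lie algebra with basis x^μ, L^μ, I^{μν} = −I^{νμ} (μ,ν = 0,…,3) and brackets [x^μ,x^ν] = iκ I^{μν}, [x^λ, I^{μν}] = i(g^{λν}L^μ − g^{λμ}L^ν), [x^μ, L^ν] = iκ I^{μν}, [I^{λρ}, I^{μν}] = i(g^{λν}I^{μρ} − g^{ρν}I^{μλ} + g^{ρμ}I^{νλ} − g^{λμ}I^{νρ}), [L^λ, I^{μν}] = i(g^{λν}L^μ − g^{λμ}L^ν), [L^μ,L^ν] = iκ I^{μν}, where g = diag(−1,1,1,1).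 Then these brackets satisfy the Jacobi identity for every real κ, so 𝔤_κ is a Lie algebra. -/
/-- The Minkowski metric `g^{μν}`, `g⁰⁰ = -1`, `g¹¹ = g²² = g³³ = 1`, viewed as
a complex scalar. -/
noncomputable def mink (μ ν : Fin 4) : ℂ :=
  if μ = ν then (if μ = 0 then -1 else 1) else 0

lemma mink_symm (μ ν : Fin 4) : mink μ ν = mink ν μ := by
  unfold mink; rcases eq_or_ne μ ν with h | h
  · subst h; rfl
  · rw [if_neg h, if_neg (Ne.symm h)]

set_option maxHeartbeats 2000000 in
/-- The 14-dimensional Lie algebra `𝔤_κ` with basis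
`xᵘ, Lᵘ, Iᵘᵛ = -Iᵛᵘ` and brackets `[xᵘ,xᵛ] = iκ Iᵘᵛ`,
`[x^λ, Iᵘᵛ] = i (g^{λν} Lᵘ − g^{λμ} Lᵛ)`, `[xᵘ, Lᵛ] = iκ Iᵘᵛ`,
`[I^{λρ}, Iᵘᵛ] = i (g^{λν} I^{μρ} − g^{ρν} I^{μλ} + g^{ρμ} I^{νλ} − g^{λμ} I^{νρ})`,
`[L^λ, Iᵘᵛ] = i (g^{λν} Lᵘ − g^{λμ} Lᵛ)`, `[Lᵘ,Lᵛ] = iκ Iᵘᵛ` satisfies the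
Jacobi identity for every real `κ`, so `𝔤_κ` is a Lie algebra. -/
theorem g_kappa_jacobi
    {M : Type*} [AddCommGroup M] [Module ℂ M]
    (Br : M →ₗ[ℂ] M →ₗ[ℂ] M)
    (hanti : ∀ a b : M, Br a b = - Br b a)
    (κ : ℝ)
    (X L : Fin 4 → M) (Iop : Fin 4 → Fin 4 → M)
    (hIanti : ∀ μ ν, Iop μ ν = - Iop ν μ)
    (hxx : ∀ μ ν, Br (X μ) (X ν) = (Complex.I * (κ : ℂ)) • Iop μ ν)
    (hxI : ∀ l μ ν, Br (X l) (Iop μ ν)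
        = Complex.I • (mink l ν • L μ - mink l μ • L ν))
    (hxL : ∀ μ ν, Br (X μ) (L ν) = (Complex.I * (κ : ℂ)) • Iop μ ν)
    (hII : ∀ l r μ ν, Br (Iop l r) (Iop μ ν)
        = Complex.I • (mink l ν • Iop μ r - mink r ν • Iop μ l
            + mink r μ • Iop ν l - mink l μ • Iop ν r))
    (hLI : ∀ l μ ν, Br (L l) (Iop μ ν)
        = Complex.I • (mink l ν • L μ - mink l μ • L ν))
    (hLL : ∀ μ ν, Br (L μ) (L ν) = (Complex.I * (κ : ℂ)) • Iop μ ν)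
    (hspan : Submodule.span ℂ
        (Set.range X ∪ Set.range L ∪ {m | ∃ μ ν, m = Iop μ ν}) = ⊤) :
    ∀ a b c : M, Br a (Br b c) + Br b (Br c a) + Br c (Br a b) = 0 := by
  -- derived bracket relations
  have hLx : ∀ μ ν, Br (L μ) (X ν) = (Complex.I * (κ : ℂ)) • Iop μ ν := by
    intro μ ν
    rw [hanti, hxL, hIanti ν μ]
    module
  -- vector-like elements
  have hVec : ∀ v : Fin 4 → M, v = X ∨ v = L →
      (∀ μ ν, Br (v μ) (X ν) = (Complex.I * (κ : ℂ)) • Iop μ ν) ∧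
      (∀ μ ν, Br (v μ) (L ν) = (Complex.I * (κ : ℂ)) • Iop μ ν) ∧
      (∀ l μ ν, Br (v l) (Iop μ ν)
        = Complex.I • (mink l ν • L μ - mink l μ • L ν)) := by
    rintro v (rfl | rfl)
    exacts [⟨hxx, hxL, hxI⟩, ⟨hLx, hLL, hLI⟩]
  have hVV' : ∀ v w : Fin 4 → M, v = X ∨ v = L → w = X ∨ w = L →
      ∀ μ ν, Br (v μ) (w ν) = (Complex.I * (κ : ℂ)) • Iop μ ν := by
    rintro v w hv (rfl | rfl)
    exacts [(hVec v hv).1, (hVec v hv).2.1]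
  have hVI' : ∀ v : Fin 4 → M, v = X ∨ v = L →
      ∀ l μ ν, Br (v l) (Iop μ ν)
        = Complex.I • (mink l ν • L μ - mink l μ • L ν) :=
    fun v hv => (hVec v hv).2.2
  have hIV' : ∀ v : Fin 4 → M, v = X ∨ v = L →
      ∀ μ ν l, Br (Iop μ ν) (v l)
        = -(Complex.I • (mink l ν • L μ - mink l μ • L ν)) := by
    intro v hv μ ν l
    rw [hanti, hVI' v hv]
  have hIL : ∀ μ ν l, Br (Iop μ ν) (L l)
      = -(Complex.I • (mink l ν • L μ - mink l μ • L ν)) :=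
    hIV' L (Or.inr rfl)
  -- the four essential Jacobi cases
  have caseVVV : ∀ V W U : Fin 4 → M, V = X ∨ V = L → W = X ∨ W = L →
      U = X ∨ U = L → ∀ μ ν ρ,
      Br (V μ) (Br (W ν) (U ρ)) + Br (W ν) (Br (U ρ) (V μ))
        + Br (U ρ) (Br (V μ) (W ν)) = 0 := by
    intro V W U hV hW hU μ ν ρ
    simp only [hVV' W U hW hU, hVV' U V hU hV, hVV' V W hV hW, map_smul,
      hVI' V hV, hVI' W hW, hVI' U hU, smul_sub, smul_smul]
    match_scalars <;> ((try simp only [mink_symm]); ring)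
  have caseVVI : ∀ V W : Fin 4 → M, V = X ∨ V = L → W = X ∨ W = L →
      ∀ l m μ ν,
      Br (V l) (Br (W m) (Iop μ ν)) + Br (W m) (Br (Iop μ ν) (V l))
        + Br (Iop μ ν) (Br (V l) (W m)) = 0 := by
    intro V W hV hW l m μ ν
    simp only [hVI' W hW, hIV' V hV, hVV' V W hV hW, hII,
      hVV' V L hV (Or.inr rfl), hVV' W L hW (Or.inr rfl),
      map_smul, map_neg, map_sub, map_add, smul_sub, smul_add, smul_neg,
      smul_smul, neg_neg]
    match_scalars <;> ((try simp only [mink_symm]); ring)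
  have caseVII : ∀ V : Fin 4 → M, V = X ∨ V = L → ∀ l a b e d,
      Br (V l) (Br (Iop a b) (Iop e d)) + Br (Iop a b) (Br (Iop e d) (V l))
        + Br (Iop e d) (Br (V l) (Iop a b)) = 0 := by
    intro V hV l a b e d
    simp only [hII, hVI' V hV, hIV' V hV, hIL,
      map_smul, map_neg, map_sub, map_add, smul_sub, smul_add, smul_neg,
      smul_smul, neg_neg]
    match_scalars <;> ((try simp only [mink_symm]); ring)
  have caseIII : ∀ a1 a2 b1 b2 c1 c2 : Fin 4,
      Br (Iop a1 a2) (Br (Iop b1 b2) (Iop c1 c2))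
        + Br (Iop b1 b2) (Br (Iop c1 c2) (Iop a1 a2))
        + Br (Iop c1 c2) (Br (Iop a1 a2) (Iop b1 b2)) = 0 := by
    intro a1 a2 b1 b2 c1 c2
    simp only [hII, map_smul, map_sub, map_add, smul_sub, smul_add, smul_smul]
    rw [hIanti b1 a1, hIanti b1 a2, hIanti b2 a1, hIanti b2 a2,
        hIanti c1 a1, hIanti c1 a2, hIanti c2 a1, hIanti c2 a2,
        hIanti c1 b1, hIanti c1 b2, hIanti c2 b1, hIanti c2 b2]
    match_scalars <;> ((try simp only [mink_symm]); ring)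
  -- normal form of generators
  have norm : ∀ m : M,
      m ∈ (Set.range X ∪ Set.range L ∪ {m | ∃ μ ν, m = Iop μ ν}) →
      (∃ v : Fin 4 → M, (v = X ∨ v = L) ∧ ∃ μ, m = v μ)
        ∨ (∃ μ ν, m = Iop μ ν) := by
    rintro m ((⟨μ, rfl⟩ | ⟨μ, rfl⟩) | ⟨μ, ν, rfl⟩)
    · exact Or.inl ⟨X, Or.inl rfl, μ, rfl⟩
    · exact Or.inl ⟨L, Or.inr rfl, μ, rfl⟩
    · exact Or.inr ⟨μ, ν, rfl⟩
  -- Jacobi on generators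
  have key : ∀ p ∈ (Set.range X ∪ Set.range L ∪ {m | ∃ μ ν, m = Iop μ ν}),
      ∀ q ∈ (Set.range X ∪ Set.range L ∪ {m | ∃ μ ν, m = Iop μ ν}),
      ∀ r ∈ (Set.range X ∪ Set.range L ∪ {m | ∃ μ ν, m = Iop μ ν}),
      Br p (Br q r) + Br q (Br r p) + Br r (Br p q) = 0 := by
    intro p hp q hq r hr
    rcases norm p hp with ⟨V, hV, μp, rfl⟩ | ⟨μp, νp, rfl⟩ <;>
      rcases norm q hq with ⟨W, hW, μq, rfl⟩ | ⟨μq, νq, rfl⟩ <;>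
        rcases norm r hr with ⟨U, hU, μr, rfl⟩ | ⟨μr, νr, rfl⟩
    · exact caseVVV V W U hV hW hU μp μq μr
    · exact caseVVI V W hV hW μp μq μr νr
    · have h := caseVVI U V hU hV μr μp μq νq
      rw [← h]; abel
    · exact caseVII V hV μp μq νq μr νr
    · have h := caseVVI W U hW hU μq μr μp νp
      rw [← h]; abel
    · have h := caseVII W hW μq μr νr μp νp
      rw [← h]; abel
    · have h := caseVII U hU μr μp νp μq νq
      rw [← h]; abel
    · exact caseIII μp νp μq νq μr νr
  -- extend by linearity
  have hmem : ∀ m : M, m ∈ Submodule.span ℂ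
      (Set.range X ∪ Set.range L ∪ {m | ∃ μ ν, m = Iop μ ν}) := by
    intro m; rw [hspan]; exact Submodule.mem_top
  have ext3 : ∀ p q : M,
      (∀ r ∈ (Set.range X ∪ Set.range L ∪ {m | ∃ μ ν, m = Iop μ ν}),
        Br p (Br q r) + Br q (Br r p) + Br r (Br p q) = 0) →
      ∀ r : M, Br p (Br q r) + Br q (Br r p) + Br r (Br p q) = 0 := by
    intro p q h r
    refine Submodule.span_induction (p := fun r _ =>
      Br p (Br q r) + Br q (Br r p) + Br r (Br p q) = 0) h ?_ ?_ ?_ (hmem r)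
    · simp
    · intro x y _ _ hx hy
      have e : Br p (Br q (x + y)) + Br q (Br (x + y) p) + Br (x + y) (Br p q)
          = (Br p (Br q x) + Br q (Br x p) + Br x (Br p q))
            + (Br p (Br q y) + Br q (Br y p) + Br y (Br p q)) := by
        simp only [map_add, LinearMap.add_apply]; abel
      rw [e, hx, hy, add_zero]
    · intro s x _ hx
      have e : Br p (Br q (s • x)) + Br q (Br (s • x) p) + Br (s • x) (Br p q)
          = s • (Br p (Br q x) + Br q (Br x p) + Br x (Br p q)) := by
        simp only [map_smul, LinearMap.smul_apply, smul_add]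
      rw [e, hx, smul_zero]
  have ext2 : ∀ p : M,
      (∀ q ∈ (Set.range X ∪ Set.range L ∪ {m | ∃ μ ν, m = Iop μ ν}),
        ∀ r : M, Br p (Br q r) + Br q (Br r p) + Br r (Br p q) = 0) →
      ∀ q r : M, Br p (Br q r) + Br q (Br r p) + Br r (Br p q) = 0 := by
    intro p h q
    refine Submodule.span_induction (p := fun q _ =>
      ∀ r : M, Br p (Br q r) + Br q (Br r p) + Br r (Br p q) = 0) h ?_ ?_ ?_
      (hmem q)
    · simp
    · intro x y _ _ hx hy r
      have e : Br p (Br (x + y) r) + Br (x + y) (Br r p) + Br r (Br p (x + y))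
          = (Br p (Br x r) + Br x (Br r p) + Br r (Br p x))
            + (Br p (Br y r) + Br y (Br r p) + Br r (Br p y)) := by
        simp only [map_add, LinearMap.add_apply]; abel
      rw [e, hx r, hy r, add_zero]
    · intro s x _ hx r
      have e : Br p (Br (s • x) r) + Br (s • x) (Br r p) + Br r (Br p (s • x))
          = s • (Br p (Br x r) + Br x (Br r p) + Br r (Br p x)) := by
        simp only [map_smul, LinearMap.smul_apply, smul_add]
      rw [e, hx r, smul_zero]
  intro a b c
  refine Submodule.span_induction (p := fun a _ =>
    ∀ b c : M, Br a (Br b c) + Br b (Br c a) + Br c (Br a b) = 0)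
    ?_ ?_ ?_ ?_ (hmem a) b c
  · intro x hx
    exact ext2 x (fun q hq => ext3 x q (fun r hr => key x hx q hq r hr))
  · simp
  · intro x y _ _ hx hy b c
    have e : Br (x + y) (Br b c) + Br b (Br c (x + y)) + Br c (Br (x + y) b)
        = (Br x (Br b c) + Br b (Br c x) + Br c (Br x b))
          + (Br y (Br b c) + Br b (Br c y) + Br c (Br y b)) := by
      simp only [map_add, LinearMap.add_apply]; abel
    rw [e, hx b c, hy b c, add_zero]
  · intro s x _ hx b c
    have e : Br (s • x) (Br b c) + Br b (Br c (s • x)) + Br c (Br (s • x) b)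
        = s • (Br x (Br b c) + Br b (Br c x) + Br c (Br x b)) := by
      simp only [map_smul, LinearMap.smul_apply, smul_add]
    rw [e, hx b c, smul_zero]
end

section
/- Let A be a unital algebra, B ⊆ A a subalgebra, u(k) invertible elements indexed by k ∈ ℝ⁴ with u(k)u(ℓ) = u(k+ℓ) and u(k) B u(−k) ⊆ B. Suppose a linear map c : A × A → A satisfies the Hochschild cocycle identity. Define λ(f,k) ∈ A by c(f,u(k)) − c(u(k), τ_{−k}(f)) = λ(f,k)u(k) for f ∈ B, where τ_k(f) = u(k)fu(−k). Then λ satisfies the compatibility relation f γ(k,ℓ) − γ(k,ℓ) f = τ_k(λ(τ_{−k}(f), ℓ)) − λ(f, k+ℓ) + λ(f,k) for all f ∈ B and k,ℓ ∈ ℝ⁴, where γ(k,ℓ) = c(u(k),u(ℓ))u(−k−ℓ). -/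
set_option maxHeartbeats 1600000 in
/-- Let `A` be a unital algebra, `B ⊆ A` a subalgebra, `u k`
invertible elements (`k ∈ ℝ⁴`) with `u k * u ℓ = u (k+ℓ)` and
`u k B u(−k) ⊆ B`, and let `c` be a (bilinear) Hochschild 2-cocycle. With
`τ_k f = u k f u(−k)`, `λ(f,k)` defined by
`c(f, u k) − c(u k, τ_{−k} f) = λ(f,k) u k`, and `γ(k,ℓ) = c(u k, u ℓ) u(−k−ℓ)`,
one has the compatibility relation
`f γ(k,ℓ) − γ(k,ℓ) f = τ_k(λ(τ_{−k} f, ℓ)) − λ(f, k+ℓ) + λ(f,k)`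
for all `f ∈ B` and `k, ℓ ∈ ℝ⁴`. -/
theorem lambda_gamma_compatibility
    {A : Type*} [Ring A] [Algebra ℂ A]
    (B : Subalgebra ℂ A)
    (u : (Fin 4 → ℝ) → A)
    (hu0 : u 0 = 1)
    (huadd : ∀ k l, u k * u l = u (k + l))
    (hstab : ∀ k, ∀ b ∈ B, u k * b * u (-k) ∈ B)
    (c : A →ₗ[ℂ] A →ₗ[ℂ] A)
    (hcoc : ∀ f g h : A, f * c g h - c (f * g) h + c f (g * h) - c f g * h = 0) :
    let τ : (Fin 4 → ℝ) → A → A := fun k f => u k * f * u (-k)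
    let lam : A → (Fin 4 → ℝ) → A :=
      fun f k => (c f (u k) - c (u k) (τ (-k) f)) * u (-k)
    let gam : (Fin 4 → ℝ) → (Fin 4 → ℝ) → A :=
      fun k l => c (u k) (u l) * u (-(k + l))
    ∀ f ∈ B, ∀ k l,
      f * gam k l - gam k l * f
        = τ k (lam (τ (-k) f) l) - lam f (k + l) + lam f k := by
  intro τ lam gam f hf k l
  -- basic unit facts
  have hun : ∀ m : Fin 4 → ℝ, u m * u (-m) = 1 := by
    intro m; rw [huadd, add_neg_cancel, hu0]
  have hnu : ∀ m : Fin 4 → ℝ, u (-m) * u m = 1 := by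
    intro m; rw [huadd, neg_add_cancel, hu0]
  have cancel : ∀ x y : A, x * u (k + l) = y * u (k + l) → x = y := by
    intro x y h
    have := congrArg (· * u (-(k+l))) h
    simpa only [mul_assoc, hun, mul_one] using this
  have hA : u (-(k+l)) = u (-l) * u (-k) := by
    rw [huadd]; congr 1; abel
  have i1 : l + -(k+l) = -k := by abel
  -- normalize the inner c-arguments
  have e1 : u (-l) * (u (-k) * f * u k) * u l = u (-(k+l)) * f * u (k+l) := by
    rw [hA, ← huadd k l]; noncomm_ring
  have e2 : u k * (u (-k) * f * u k) = f * u k := by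
    rw [← mul_assoc, ← mul_assoc, hun, one_mul]
  have e3 : u l * (u (-(k+l)) * f * u (k+l)) = u (-k) * f * u k * u l :=
    calc u l * (u (-(k+l)) * f * u (k+l))
        = (u l * u (-(k+l))) * (f * u (k+l)) := by noncomm_ring
      _ = u (-k) * (f * u (k+l)) := by rw [huadd, i1]
      _ = u (-k) * f * u k * u l := by rw [← huadd k l]; noncomm_ring
  simp only [τ, lam, gam, neg_neg]
  rw [e1]
  refine cancel _ _ ?_
  -- cocycle instances
  have h1 := hcoc f (u k) (u l)
  rw [huadd] at h1
  have h2 := hcoc (u k) (u (-k) * f * u k) (u l)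
  rw [e2, ← e3] at h2
  have h3 := hcoc (u k) (u l) (u (-(k+l)) * f * u (k+l))
  rw [huadd] at h3
  -- eliminate unit products
  simp only [sub_mul, add_mul, mul_assoc, huadd, neg_add_cancel, neg_add_cancel_left, hu0,
    mul_one]
  have i2 : -l + -k + (k + l) = (0 : Fin 4 → ℝ) := by abel
  rw [i2, hu0]
  simp only [mul_assoc, mul_one] at h1 h2 h3 ⊢
  linear_combination (norm := noncomm_ring) h1 - h2 + h3
end

section
/- With notation as above, the Hochschild cocycle identity for c also implies, for f,g ∈ B and k ∈ ℝ⁴: c^I(f,g) − τ_k(c^I(τ_{−k}(f), τ_{−k}(g))) = f λ(g,k) − λ(fg, k) + λ(f,k) g, where c^I denotes the restriction of c to B × B and λ(f,k) = (c(f,u(k)) − c(u(k),τ_{−k}(f)))u(−k). -/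
/-- In the same setting (A a unital algebra, `B` a subalgebra
stable under `τ_k f = u k f u(−k)`, `u k * u ℓ = u(k+ℓ)`, `c` a Hochschild
2-cocycle of `A`), for `f, g ∈ B` and `k ∈ ℝ⁴` one has
`cᴵ(f,g) − τ_k(cᴵ(τ_{−k} f, τ_{−k} g)) = f λ(g,k) − λ(fg, k) + λ(f,k) g`,
where `cᴵ` is the restriction of `c` to `B × B` and
`λ(f,k) = (c(f, u k) − c(u k, τ_{−k} f)) u(−k)`. -/
theorem cI_lambda_compatibility
    {A : Type*} [Ring A] [Algebra ℂ A]
    (B : Subalgebra ℂ A)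
    (u : (Fin 4 → ℝ) → A)
    (hu0 : u 0 = 1)
    (huadd : ∀ k l, u k * u l = u (k + l))
    (hstab : ∀ k, ∀ b ∈ B, u k * b * u (-k) ∈ B)
    (c : A →ₗ[ℂ] A →ₗ[ℂ] A)
    (hcoc : ∀ f g h : A, f * c g h - c (f * g) h + c f (g * h) - c f g * h = 0) :
    let τ : (Fin 4 → ℝ) → A → A := fun k f => u k * f * u (-k)
    let lam : A → (Fin 4 → ℝ) → A :=
      fun f k => (c f (u k) - c (u k) (τ (-k) f)) * u (-k)
    ∀ f ∈ B, ∀ g ∈ B, ∀ k,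
      c f g - τ k (c (τ (-k) f) (τ (-k) g))
        = f * lam g k - lam (f * g) k + lam f k * g := by
  intro τ lam f hf g hg k
  have hUV : u k * u (-k) = 1 := by rw [huadd, add_neg_cancel, hu0]
  have hVU : u (-k) * u k = 1 := by rw [huadd, neg_add_cancel, hu0]
  have ha : ∀ x : A, u k * (u (-k) * x * u k) = x * u k := by
    intro x
    calc u k * (u (-k) * x * u k) = (u k * u (-k)) * (x * u k) := by noncomm_ring
    _ = x * u k := by rw [hUV, one_mul]
  have hb : (u (-k) * f * u k) * (u (-k) * g * u k) = u (-k) * (f * g) * u k := by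
    calc (u (-k) * f * u k) * (u (-k) * g * u k)
        = u (-k) * f * (u k * u (-k)) * g * u k := by noncomm_ring
    _ = u (-k) * (f * g) * u k := by rw [hUV]; noncomm_ring
  have h1 := hcoc f g (u k)
  have h2 := hcoc f (u k) (u (-k) * g * u k)
  have h3 := hcoc (u k) (u (-k) * f * u k) (u (-k) * g * u k)
  rw [ha] at h2
  rw [ha, hb] at h3
  simp only [τ, lam, neg_neg]
  linear_combination (norm := noncomm_ring)
    (-h1 + h2 - h3) * u (-k)
    - c f g * hUV
    + (c f (u k) * u (-k) * g) * hUV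
    - (c (u k) (u (-k) * f * u k) * u (-k) * g) * hUV
end
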